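/- arXiv:0910.4724 — 5 statements merged into one kernel-verified Lean document; each statement's English description precedes it below -/
import Mathlib

section
/- Let R be a left Artinian ring, let 𝒮 be a set of simple R-modules, and let C be a cyclic R-module such that Hom_R(C, E(S')) = 0 for every simple module S' not isomorphic to a member of 𝒮 (E(S') the injective hull). Then every composition factor of C is isomorphic to a module in 𝒮. -/
/-!
A composition factor `Q = N₂ / N₁` of `C` maps injectively into an injective hull `E(Q)`.
Injectivity of `E(Q)` extends the nonzero map `N₂ → Q → E(Q)` along `N₂ ⊆ C` to a nonzero map
`C → E(Q)`, so `Q` cannot lie outside `𝒮`. The injective hull is built inside an injective module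
`E₀ ⊇ Q` as a maximal essential extension `M` of `Q`: for a complement `N` of `M`, injectivity of
`E₀` gives a map `E₀ / N → E₀` over `M`, which is injective because `M` is essential in `E₀ / N`,
so its image is an essential extension of `M`, hence equal to `M`; thus `M` is a retract of `E₀`.
-/

universe u

open CategoryTheory

section Lattice

variable {α : Type*} [CompleteLattice α]

def IsEssentialIn (a b : α) : Prop :=
  ∀ p ≤ b, Disjoint p a → p = ⊥

theorem IsEssentialIn.refl (a : α) : IsEssentialIn a a :=
  fun _ hp hdis => hdis.eq_bot_of_le hp

theorem IsEssentialIn.trans {a b c : α} (hab : IsEssentialIn a b) (hbc : IsEssentialIn b c) :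
    IsEssentialIn a c := fun p hp hdis =>
  hbc p hp <| disjoint_iff.mpr <| hab _ inf_le_right (hdis.mono_left inf_le_left)

variable [IsCompactlyGenerated α]

theorem exists_maximal_isEssentialIn (a : α) :
    ∃ m, Maximal (fun b => a ≤ b ∧ IsEssentialIn a b) m := by
  obtain ⟨m, -, hm⟩ := zorn_le_nonempty₀ {b | a ≤ b ∧ IsEssentialIn a b}
    (fun c hc hchain b hb => by
      refine ⟨sSup c, ⟨(hc hb).1.trans (le_sSup hb), fun p hp hdis => ?_⟩, fun _ => le_sSup⟩
      rw [← inf_eq_left.mpr hp, hchain.directedOn.inf_sSup_eq]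
      exact iSup₂_eq_bot.mpr fun m hm =>
        (hc hm).2 _ inf_le_right (hdis.mono_left inf_le_left))
    a ⟨le_rfl, .refl a⟩
  exact ⟨m, hm⟩

theorem exists_maximal_disjoint (b : α) : ∃ n, Maximal (Disjoint · b) n := by
  obtain ⟨n, -, hn⟩ := zorn_le_nonempty₀ {n | Disjoint n b}
    (fun c hc hchain _ _ =>
      ⟨sSup c, hchain.directedOn.disjoint_sSup_left.mpr hc, fun _ => le_sSup⟩)
    ⊥ disjoint_bot_left
  exact ⟨n, hn⟩

end Lattice

section Module

variable {R : Type*} [Ring R]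

namespace Submodule

variable {A B : Type*} [AddCommGroup A] [Module R A] [AddCommGroup B] [Module R B]

theorem isEssentialIn_map_iff {f : A →ₗ[R] B} (hf : Function.Injective f)
    {S T : Submodule R A} : IsEssentialIn (S.map f) (T.map f) ↔ IsEssentialIn S T := by
  constructor
  · intro h p hp hdis
    refine map_injective_of_injective hf ?_
    rw [map_bot]
    exact h _ (map_mono hp) (disjoint_map hf hdis)
  · intro h p hp hdis
    have hcomap : comap f p = ⊥ := by
      refine h _ ((comap_mono hp).trans (comap_map_eq_of_injective hf T).le) ?_
      rw [← comap_map_eq_of_injective hf S, disjoint_iff, ← comap_inf, disjoint_iff.mp hdis,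
        comap_bot, LinearMap.ker_eq_bot.mpr hf]
    rw [← map_comap_eq_self (hp.trans LinearMap.map_le_range), hcomap, map_bot]

theorem isEssentialIn_map_mkQ_of_maximal_disjoint {M N : Submodule R A}
    (hN : Maximal (Disjoint · M) N) : IsEssentialIn (M.map N.mkQ) ⊤ := by
  intro p _ hdis
  have hdis' : Disjoint (p.comap N.mkQ) M := by
    rw [disjoint_def]
    intro x hxp hxM
    have hx : N.mkQ x = 0 := disjoint_def.mp hdis _ hxp (mem_map_of_mem hxM)
    exact disjoint_def.mp hN.prop x ((Quotient.mk_eq_zero N).mp hx) hxM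
  have hle : p.comap N.mkQ ≤ N := hN.le_of_ge hdis' (by simpa using LinearMap.ker_le_comap N.mkQ)
  rw [← map_comap_eq_of_surjective N.mkQ_surjective p, eq_bot_iff, map_le_iff_le_comap,
    comap_bot, ker_mkQ]
  exact hle

end Submodule

theorem LinearMap.injective_of_injective_comp_of_isEssentialIn
    {A B C : Type*} [AddCommGroup A] [Module R A] [AddCommGroup B] [Module R B]
    [AddCommGroup C] [Module R C] {g : A →ₗ[R] B} {h : B →ₗ[R] C}
    (hhg : Function.Injective (h ∘ₗ g)) (hg : IsEssentialIn (LinearMap.range g) ⊤) :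
    Function.Injective h := by
  rw [← ker_eq_bot]
  refine hg _ le_top (Submodule.disjoint_def.mpr ?_)
  rintro _ hx ⟨a, rfl⟩
  have : h (g a) = h (g 0) := by rw [mem_ker.mp hx, map_zero, map_zero]
  rw [hhg this, map_zero]

theorem Module.Injective.of_retraction {M E : Type u} [AddCommGroup M] [Module R M]
    [AddCommGroup E] [Module R E] [hE : Module.Injective R E] (i : M →ₗ[R] E) (r : E →ₗ[R] M)
    (hri : r ∘ₗ i = LinearMap.id) : Module.Injective R M where
  out X Y _ _ _ _ f hf g := by
    obtain ⟨g', hg'⟩ := hE.out f hf (i ∘ₗ g)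
    refine ⟨r ∘ₗ g', fun x => ?_⟩
    rw [LinearMap.comp_apply, hg', ← LinearMap.comp_apply r, ← LinearMap.comp_assoc, hri,
      LinearMap.id_comp]

theorem Submodule.injective_of_maximal_isEssentialIn {E : Type*} [AddCommGroup E] [Module R E]
    [hE : Module.Injective R E] {S M : Submodule R E}
    (hM : Maximal (fun T => S ≤ T ∧ IsEssentialIn S T) M) : Module.Injective R M := by
  obtain ⟨N, hN⟩ := exists_maximal_disjoint M
  let g : M →ₗ[R] E ⧸ N := N.mkQ ∘ₗ M.subtype
  have hg : Function.Injective g := by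
    rw [← LinearMap.ker_eq_bot, LinearMap.ker_comp, ker_mkQ, ← disjoint_iff_comap_eq_bot]
    exact hN.prop.symm
  have hg_ess : IsEssentialIn (LinearMap.range g) ⊤ := by
    rw [LinearMap.range_comp, range_subtype]
    exact isEssentialIn_map_mkQ_of_maximal_disjoint hN
  obtain ⟨h, hhg⟩ := hE.out g hg M.subtype
  replace hhg : h ∘ₗ g = M.subtype := LinearMap.ext hhg
  have hh : Function.Injective h :=
    LinearMap.injective_of_injective_comp_of_isEssentialIn (hhg ▸ M.injective_subtype) hg_ess
  have hM_le : M ≤ LinearMap.range h := by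
    simpa [hhg] using LinearMap.range_comp_le_range g h
  have hM_ess : IsEssentialIn M (LinearMap.range h) := by
    have := (isEssentialIn_map_iff hh).mpr hg_ess
    rwa [← LinearMap.range_comp, hhg, range_subtype, map_top] at this
  have hrange : LinearMap.range h ≤ M :=
    hM.le_of_ge ⟨hM.prop.1.trans hM_le, hM.prop.2.trans hM_ess⟩ hM_le
  refine Module.Injective.of_retraction M.subtype
    ((h ∘ₗ N.mkQ).codRestrict M fun x => hrange ⟨_, rfl⟩) ?_
  exact LinearMap.ext fun m => Subtype.ext (LinearMap.congr_fun hhg m)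

theorem Module.exists_injective_isEssentialIn_range [Small.{u} R] (Q : Type u) [AddCommGroup Q]
    [Module R Q] :
    ∃ (E : Type u) (_ : AddCommGroup E) (_ : Module R E), Module.Injective R E ∧
      ∃ j : Q →ₗ[R] E, Function.Injective j ∧ IsEssentialIn (LinearMap.range j) ⊤ := by
  let E₀ := Injective.under (ModuleCat.of R Q)
  have : Module.Injective R E₀ :=
    (Module.injective_iff_injective_object R E₀).mpr (Injective.injective_under _)
  let i : Q →ₗ[R] E₀ := (Injective.ι (ModuleCat.of R Q)).hom
  have hi : Function.Injective i := (ModuleCat.mono_iff_injective _).mp inferInstance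
  obtain ⟨M, hM⟩ := exists_maximal_isEssentialIn (LinearMap.range i)
  have hiM : ∀ q, i q ∈ M := fun q => hM.prop.1 ⟨q, rfl⟩
  refine ⟨M, _, _, Submodule.injective_of_maximal_isEssentialIn hM, i.codRestrict M hiM,
    fun a b hab => hi (congrArg Subtype.val hab), ?_⟩
  rw [← Submodule.isEssentialIn_map_iff M.injective_subtype, Submodule.map_top,
    Submodule.range_subtype, ← LinearMap.range_comp, LinearMap.subtype_comp_codRestrict]
  exact hM.prop.2

end Module

theorem stmt7_general {R : Type u} [Ring R]
    (𝒮 : Set (ModuleCat.{u} R))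
    (C : Type u) [AddCommGroup C] [Module R C]
    (hhom : ∀ (S' E' : Type u) [AddCommGroup S'] [Module R S']
      [AddCommGroup E'] [Module R E'],
      IsSimpleModule R S' → (¬ ∃ S ∈ 𝒮, Nonempty (S' ≃ₗ[R] S)) →
      Module.Injective R E' →
      ∀ j : S' →ₗ[R] E', Function.Injective j →
        (∀ N : Submodule R E', N ⊓ LinearMap.range j = ⊥ → N = ⊥) →
        ∀ f : C →ₗ[R] E', f = 0) :
    ∀ N₁ N₂ : Submodule R C, N₁ ≤ N₂ →
      IsSimpleModule R (N₂ ⧸ (Submodule.comap N₂.subtype N₁)) →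
      ∃ S ∈ 𝒮, Nonempty ((N₂ ⧸ (Submodule.comap N₂.subtype N₁)) ≃ₗ[R] S) := by
  intro N₁ N₂ _ hQ
  by_contra hQ𝒮
  set N := Submodule.comap N₂.subtype N₁
  obtain ⟨E, _, _, hE, j, hj, hj_ess⟩ := Module.exists_injective_isEssentialIn_range (R := R)
    (N₂ ⧸ N)
  obtain ⟨f, hf⟩ := hE.out N₂.subtype N₂.injective_subtype (j ∘ₗ N.mkQ)
  have hf0 : f = 0 := hhom _ E hQ hQ𝒮 hE j hj
    (fun P hP => hj_ess P le_top (disjoint_iff.mpr hP)) f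
  have : Nontrivial (N₂ ⧸ N) := IsSimpleModule.nontrivial R _
  obtain ⟨x, hx⟩ := exists_ne (0 : N₂ ⧸ N)
  obtain ⟨n, rfl⟩ := N.mkQ_surjective x
  refine hx (hj ?_)
  rw [map_zero, ← LinearMap.comp_apply, ← hf, hf0, LinearMap.zero_apply]

/-- Over a left Artinian ring, if a cyclic module `C` admits no nonzero map to the
injective hull of any simple module not isomorphic to a member of `𝒮`, then every
composition factor (simple subquotient) of `C` is isomorphic to a member of `𝒮`. -/
theorem stmt7 {R : Type u} [Ring R] [IsArtinianRing R]
    (𝒮 : Set (ModuleCat.{u} R)) (h𝒮 : ∀ S ∈ 𝒮, IsSimpleModule R S)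
    (C : Type u) [AddCommGroup C] [Module R C]
    (hcyc : ∃ c : C, Submodule.span R {c} = ⊤)
    (hhom : ∀ (S' E' : Type u) [AddCommGroup S'] [Module R S']
      [AddCommGroup E'] [Module R E'],
      IsSimpleModule R S' → (¬ ∃ S ∈ 𝒮, Nonempty (S' ≃ₗ[R] S)) →
      Module.Injective R E' →
      ∀ j : S' →ₗ[R] E', Function.Injective j →
        (∀ N : Submodule R E', N ⊓ LinearMap.range j = ⊥ → N = ⊥) →
        ∀ f : C →ₗ[R] E', f = 0) :
    ∀ N₁ N₂ : Submodule R C, N₁ ≤ N₂ →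
      IsSimpleModule R (N₂ ⧸ (Submodule.comap N₂.subtype N₁)) →
      ∃ S ∈ 𝒮, Nonempty ((N₂ ⧸ (Submodule.comap N₂.subtype N₁)) ≃ₗ[R] S) :=
  stmt7_general 𝒮 C hhom
end

section
/- Let R be a ring, P a finitely generated projective left R-module, and E an injective left R-module such that for finitely generated modules N, Hom_R(P,N) = 0 iff Hom_R(N,E) = 0. Then for an arbitrary R-module X, Hom_R(P,X) = 0 if and only if Hom_R(X,E) = 0. -/
universe u

/-- If `P` is a finitely generated projective module and `E` an injective module such that
`Hom(P,N) = 0 ↔ Hom(N,E) = 0` for all finitely generated `N`, then the same equivalence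
holds for arbitrary modules `X`. -/
theorem stmt9 {R : Type u} [Ring R]
    (P E : Type u) [AddCommGroup P] [Module R P] [AddCommGroup E] [Module R E]
    (hPfin : Module.Finite R P) (hPproj : Module.Projective R P)
    (hEinj : Module.Injective R E)
    (h : ∀ (N : Type u) [AddCommGroup N] [Module R N], Module.Finite R N →
      ((∀ f : P →ₗ[R] N, f = 0) ↔ (∀ g : N →ₗ[R] E, g = 0)))
    (X : Type u) [AddCommGroup X] [Module R X] :
    (∀ f : P →ₗ[R] X, f = 0) ↔ (∀ g : X →ₗ[R] E, g = 0) := by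
  constructor
  · intro hP g
    ext x
    have hSfin : Module.Finite R (Submodule.span R {x}) :=
      Module.Finite.span_of_finite R (Set.finite_singleton x)
    have hPS : ∀ f : P →ₗ[R] (Submodule.span R {x} : Submodule R X), f = 0 := by
      intro f
      have h0 : (Submodule.span R {x} : Submodule R X).subtype.comp f = 0 := hP _
      ext p
      exact LinearMap.congr_fun h0 p
    have hSE := (h _ hSfin).mp hPS
    have h0 : g.comp (Submodule.span R {x} : Submodule R X).subtype = 0 := hSE _
    exact LinearMap.congr_fun h0 ⟨x, Submodule.mem_span_singleton_self x⟩
  · intro hE f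
    have hSfin : Module.Finite R (LinearMap.range f) := Module.Finite.range f
    have hSE : ∀ g : LinearMap.range f →ₗ[R] E, g = 0 := by
      intro g
      obtain ⟨g', hg'⟩ := hEinj.out (LinearMap.range f).subtype
        (LinearMap.range f).injective_subtype g
      ext s
      have h1 := hg' s
      rw [hE g'] at h1
      exact h1.symm
    have hPS := (h _ hSfin).mpr hSE
    have h0 : f.rangeRestrict = 0 := hPS _
    ext p
    exact congrArg Subtype.val (LinearMap.congr_fun h0 p)
end

section
/- Let 𝒯 be a hereditary torsion class of left R-modules with torsion radical t, and let M be an R-module. Construct inductively: M⁰ = M, Fⁿ = Mⁿ/t(Mⁿ), Iⁿ = injective hull of Fⁿ, and Mⁿ⁺¹ = Iⁿ/Fⁿ, with differential d: Iⁿ → Iⁿ⁺¹ the composite Iⁿ → Mⁿ⁺¹ → Fⁿ⁺¹ → Iⁿ⁺¹. Then d² = 0, so I⁰ → I¹ → I² → ⋯ is a cochain complex, and the cohomology of the augmented complex M → I⁰ → I¹ → ⋯ in degree n is isomorphic to t(Mⁿ). -/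
/-! The differential `dₙ = eₙ₊₁ ∘ π ∘ pₙ` factors through the surjection `pₙ : Iⁿ → Mⁿ⁺¹`
followed by the quotient by `t(Mⁿ⁺¹)` and an injection, so `ker dₙ = pₙ⁻¹(t(Mⁿ⁺¹))`.
Since `π ∘ pₙ₋₁` is onto `Fⁿ`, the incoming map `dₙ₋₁` (or the augmentation) has the same
image as `eₙ`, which is `ker pₙ`. Hence the cohomology is `pₙ⁻¹(t(Mⁿ⁺¹)) / ker pₙ ≅ t(Mⁿ⁺¹)`. -/

universe u

structure HereditaryTorsionClass (R : Type u) [Ring R] where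
  tor : ModuleCat.{u} R → Prop
  closed_submodule : ∀ (M N : ModuleCat.{u} R) (f : N →ₗ[R] M),
    Function.Injective f → tor M → tor N
  closed_quotient : ∀ (M N : ModuleCat.{u} R) (f : M →ₗ[R] N),
    Function.Surjective f → tor M → tor N
  closed_directSum : ∀ (ι : Type u) (M : ι → ModuleCat.{u} R),
    (∀ i, tor (M i)) → tor (ModuleCat.of R (DirectSum ι fun i => M i))
  closed_extension : ∀ (M : ModuleCat.{u} R) (N : Submodule R M),
    tor (ModuleCat.of R N) → tor (ModuleCat.of R (M ⧸ N)) → tor M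

section

open LinearMap Function

variable {R : Type*} [Ring R] {A I M J : Type*} [AddCommGroup A] [Module R A]
  [AddCommGroup I] [Module R I] [AddCommGroup M] [Module R M] [AddCommGroup J] [Module R J]

theorem LinearMap.ker_comp_mkQ_comp {T : Submodule R M} {e : (M ⧸ T) →ₗ[R] J}
    (he : Injective e) (p : I →ₗ[R] M) : ker (e ∘ₗ T.mkQ ∘ₗ p) = T.comap p := by
  rw [ker_comp_of_ker_eq_bot _ (ker_eq_bot_of_injective he), ker_comp, Submodule.ker_mkQ]

theorem LinearMap.range_comp_mkQ_comp (T : Submodule R M) (e : (M ⧸ T) →ₗ[R] J)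
    {p : I →ₗ[R] M} (hp : Surjective p) : range (e ∘ₗ T.mkQ ∘ₗ p) = range e :=
  range_comp_of_range_eq_top e (range_eq_top.2 (T.mkQ_surjective.comp hp))

noncomputable def Submodule.comapQuotientKerEquivOfSurjective {p : I →ₗ[R] M}
    (hp : Surjective p) (T : Submodule R M) :
    (T.comap p ⧸ (ker p).comap (T.comap p).subtype) ≃ₗ[R] T :=
  let q : T.comap p →ₗ[R] T := p.restrict fun _ hx => hx
  have hq : Surjective q := fun ⟨t, ht⟩ =>
    let ⟨x, hx⟩ := hp t
    ⟨⟨x, by simpa [hx] using ht⟩, Subtype.ext hx⟩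
  (Submodule.quotEquivOfEq _ _ (ker_restrict _).symm).trans (q.quotKerEquivOfSurjective hq)

variable {f : A →ₗ[R] I} {p : I →ₗ[R] M} {T : Submodule R M} {e : (M ⧸ T) →ₗ[R] J}

theorem LinearMap.comp_mkQ_comp_comp_eq_zero (hf : range f = ker p) :
    (e ∘ₗ T.mkQ ∘ₗ p) ∘ₗ f = 0 :=
  range_le_ker_iff.1 (hf.le.trans (ker_le_ker_comp p (e ∘ₗ T.mkQ)))

theorem LinearMap.nonempty_homology_comp_mkQ_comp_equiv (hf : range f = ker p)
    (hp : Surjective p) (he : Injective e) :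
    Nonempty ((ker (e ∘ₗ T.mkQ ∘ₗ p) ⧸
        (range f).comap (ker (e ∘ₗ T.mkQ ∘ₗ p)).subtype) ≃ₗ[R] T) := by
  rw [ker_comp_mkQ_comp he, hf]
  exact ⟨Submodule.comapQuotientKerEquivOfSurjective hp T⟩

end

theorem stmt12_general {R : Type u} [Ring R]
    (Mod : ℕ → Type u) [∀ n, AddCommGroup (Mod n)] [∀ n, Module R (Mod n)]
    (tsub : ∀ n, Submodule R (Mod n))
    (I : ℕ → Type u) [∀ n, AddCommGroup (I n)] [∀ n, Module R (I n)]
    (e : ∀ n, (Mod n ⧸ tsub n) →ₗ[R] I n) (he : ∀ n, Function.Injective (e n))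
    (p : ∀ n, I n →ₗ[R] Mod (n + 1)) (hp : ∀ n, Function.Surjective (p n))
    (hkerp : ∀ n, LinearMap.ker (p n) = LinearMap.range (e n))
    (d : ∀ n, I n →ₗ[R] I (n + 1))
    (hd : ∀ n, d n = (e (n + 1)) ∘ₗ ((tsub (n + 1)).mkQ ∘ₗ p n))
    (a : Mod 0 →ₗ[R] I 0) (ha : a = (e 0) ∘ₗ (tsub 0).mkQ) :
    (∀ n, (d (n + 1)) ∘ₗ (d n) = 0) ∧ ((d 0) ∘ₗ a = 0) ∧
    LinearMap.ker a = tsub 0 ∧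
    Nonempty ((LinearMap.ker (d 0) ⧸
        Submodule.comap (LinearMap.ker (d 0)).subtype (LinearMap.range a))
      ≃ₗ[R] tsub 1) ∧
    ∀ n, Nonempty ((LinearMap.ker (d (n + 1)) ⧸
        Submodule.comap (LinearMap.ker (d (n + 1))).subtype (LinearMap.range (d n)))
      ≃ₗ[R] tsub (n + 2)) := by
  have hrange_a : LinearMap.range a = LinearMap.ker (p 0) := by
    rw [hkerp, ha, LinearMap.range_comp_of_range_eq_top _ (tsub 0).range_mkQ]
  have hrange_d : ∀ n, LinearMap.range (d n) = LinearMap.ker (p (n + 1)) := fun n => by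
    rw [hkerp, hd, LinearMap.range_comp_mkQ_comp _ _ (hp n)]
  refine ⟨fun n => ?_, ?_, ?_, ?_, fun n => ?_⟩
  · rw [hd (n + 1)]
    exact LinearMap.comp_mkQ_comp_comp_eq_zero (hrange_d n)
  · rw [hd 0]
    exact LinearMap.comp_mkQ_comp_comp_eq_zero hrange_a
  · rw [ha, LinearMap.ker_comp_of_ker_eq_bot _ (LinearMap.ker_eq_bot_of_injective (he 0)),
      Submodule.ker_mkQ]
  · rw [hd 0]
    exact LinearMap.nonempty_homology_comp_mkQ_comp_equiv hrange_a (hp 0) (he 1)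
  · rw [hd (n + 1)]
    exact LinearMap.nonempty_homology_comp_mkQ_comp_equiv (hrange_d n) (hp (n + 1)) (he (n + 2))

/-- Construction 3.1: `Mod 0 = M`, `tsub n = t(Mod n)` (largest torsion submodule),
`F n = Mod n ⧸ tsub n`, `I n` an injective hull of `F n` via the embedding `e n`,
and `Mod (n+1) = I n ⧸ F n` realized by the surjection `p n : I n → Mod (n+1)` with
`ker (p n) = range (e n)`.  With the differential `d n = e (n+1) ∘ mkQ ∘ p n` and the
augmentation `a = e 0 ∘ mkQ`, one has `d ∘ d = 0`, `d 0 ∘ a = 0`, and the cohomology of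
the augmented complex `M → I⁰ → I¹ → ⋯` in degree `n` is isomorphic to `t(Mⁿ)`. -/
theorem stmt12 {R : Type u} [Ring R] (tc : HereditaryTorsionClass R)
    (Mod : ℕ → Type u) [∀ n, AddCommGroup (Mod n)] [∀ n, Module R (Mod n)]
    (tsub : ∀ n, Submodule R (Mod n))
    (htor : ∀ n, tc.tor (ModuleCat.of R (tsub n)))
    (hlargest : ∀ n, ∀ N : Submodule R (Mod n), tc.tor (ModuleCat.of R N) → N ≤ tsub n)
    (I : ℕ → Type u) [∀ n, AddCommGroup (I n)] [∀ n, Module R (I n)]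
    (hIinj : ∀ n, Module.Injective R (I n))
    (e : ∀ n, (Mod n ⧸ tsub n) →ₗ[R] I n) (he : ∀ n, Function.Injective (e n))
    (hess : ∀ n, ∀ N : Submodule R (I n), N ⊓ LinearMap.range (e n) = ⊥ → N = ⊥)
    (p : ∀ n, I n →ₗ[R] Mod (n + 1)) (hp : ∀ n, Function.Surjective (p n))
    (hkerp : ∀ n, LinearMap.ker (p n) = LinearMap.range (e n))
    (d : ∀ n, I n →ₗ[R] I (n + 1))
    (hd : ∀ n, d n = (e (n + 1)) ∘ₗ ((tsub (n + 1)).mkQ ∘ₗ p n))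
    (a : Mod 0 →ₗ[R] I 0) (ha : a = (e 0) ∘ₗ (tsub 0).mkQ) :
    (∀ n, (d (n + 1)) ∘ₗ (d n) = 0) ∧ ((d 0) ∘ₗ a = 0) ∧
    LinearMap.ker a = tsub 0 ∧
    Nonempty ((LinearMap.ker (d 0) ⧸
        Submodule.comap (LinearMap.ker (d 0)).subtype (LinearMap.range a))
      ≃ₗ[R] tsub 1) ∧
    ∀ n, Nonempty ((LinearMap.ker (d (n + 1)) ⧸
        Submodule.comap (LinearMap.ker (d (n + 1))).subtype (LinearMap.range (d n)))
      ≃ₗ[R] tsub (n + 2)) :=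
  stmt12_general Mod tsub I e he p hp hkerp d hd a ha
end

section
/- Let R be a left Artinian ring, 𝒮 a set of pairwise non-isomorphic simple R-modules, 𝒮' a set of representatives of the remaining isomorphism classes of simples, and E = ∏_{S'∈𝒮'} E(S') the product of injective hulls of members of 𝒮'. Define 𝒯 = {M : Hom_R(M,F)=0 for all F with Hom_R(S,F)=0 ∀S∈𝒮}. Then E is an injective cogenerator for 𝒯: E is injective, and an R-module M is in 𝒯 if and only if Hom_R(M,E) = 0. -/
/-!
A simple module `S` with `S ≇ S'` has no nonzero map to the essential extension `E(S')` of `S'`: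
its image would be a simple submodule, hence meet and so equal the socle `S'`. Thus every `S ∈ 𝒮`
maps trivially to `E`, and `Hom(M, E) = 0` for `M ∈ 𝒯`. Conversely, let `f : M → F` be nonzero
with `F` killed by `𝒮`. A nonzero value of `f` generates a cyclic, hence Artinian, submodule, which
contains a simple `T`. As `F` is killed by `𝒮`, `T ≅ S' i` for some `i`, and injectivity of `E`
extends the embedding `T ≅ S' i ↪ E(S' i) ↪ E` to a map `F → E` that does not vanish on the image
of `f`.
-/

universe u v

open Submodule LinearMap

section

variable {R F E : Type*} [Ring R] [AddCommGroup F] [Module R F] [AddCommGroup E] [Module R E]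

theorem Submodule.exists_isAtom_le_span_singleton [IsArtinianRing R] {y : F} (hy : y ≠ 0) :
    ∃ T : Submodule R F, IsAtom T ∧ T ≤ R ∙ y := by
  have : IsArtinian R (R ∙ y) := isArtinian_of_fg_of_artinian _ (fg_span_singleton y)
  have : Nontrivial (R ∙ y) := nontrivial_span_singleton hy
  obtain ⟨T, hT⟩ := IsAtomic.exists_atom (Submodule R (R ∙ y))
  refine ⟨T.map (R ∙ y).subtype, ?_, map_subtype_le _ _⟩
  rw [← isSimpleModule_iff_isAtom] at hT ⊢
  exact IsSimpleModule.congr (T.equivMapOfInjective _ (injective_subtype _)).symm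

theorem LinearMap.exists_isAtom_le_range {M : Type*} [AddCommGroup M] [Module R M]
    [IsArtinianRing R] {f : M →ₗ[R] F} (hf : f ≠ 0) :
    ∃ T : Submodule R F, IsAtom T ∧ T ≤ range f := by
  obtain ⟨x, hx⟩ : ∃ x, f x ≠ 0 := by
    by_contra! h
    exact hf (LinearMap.ext h)
  obtain ⟨T, hT, hle⟩ := exists_isAtom_le_span_singleton (R := R) hx
  exact ⟨T, hT, hle.trans ((span_singleton_le_iff_mem _ _).mpr (mem_range_self f x))⟩

theorem LinearMap.isAtom_range_of_injective {S : Type*} [AddCommGroup S] [Module R S]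
    [IsSimpleModule R S] {k : S →ₗ[R] E} (hk : Function.Injective k) : IsAtom (range k) :=
  isSimpleModule_iff_isAtom.mp (IsSimpleModule.congr (LinearEquiv.ofInjective k hk).symm)

theorem nonempty_linearEquiv_of_essential {S S₀ : Type*} [AddCommGroup S] [Module R S]
    [AddCommGroup S₀] [Module R S₀] [IsSimpleModule R S] [IsSimpleModule R S₀]
    {j : S₀ →ₗ[R] E} (hj : Function.Injective j)
    (hess : ∀ N : Submodule R E, N ⊓ range j = ⊥ → N = ⊥) {g : S →ₗ[R] E} (hg : g ≠ 0) :
    Nonempty (S ≃ₗ[R] S₀) := by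
  have hg_inj := injective_of_ne_zero hg
  have hg_atom := isAtom_range_of_injective hg_inj
  have heq : range g = range j := by
    by_contra hne
    exact hg_atom.1 (hess _ (hg_atom.disjoint_of_ne (isAtom_range_of_injective hj) hne).eq_bot)
  exact ⟨(LinearEquiv.ofInjective g hg_inj).trans
    ((LinearEquiv.ofEq _ _ heq).trans (LinearEquiv.ofInjective j hj).symm)⟩

end

theorem Module.Injective.exists_not_le_ker {R F : Type*} {E : Type v} [Ring R] [Small.{v} R]
    [AddCommGroup F] [Module R F] [AddCommGroup E] [Module R E] [Module.Injective R E]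
    {T : Submodule R F} (hT : T ≠ ⊥) {g : T →ₗ[R] E} (hg : Function.Injective g) :
    ∃ h : F →ₗ[R] E, ¬ T ≤ ker h := by
  obtain ⟨h, hh⟩ := Module.Injective.extension_property R E T F T.subtype T.injective_subtype g
  refine ⟨h, fun hle => hT (eq_bot_iff.mpr fun t ht => ?_)⟩
  have : g ⟨t, ht⟩ = 0 := by rw [← hh]; exact hle ht
  simpa using hg (this.trans g.map_zero.symm)

theorem stmt15_general {R : Type u} [Ring R] [IsArtinianRing R]
    (𝒮 : Set (ModuleCat.{u} R)) (h𝒮 : ∀ S ∈ 𝒮, IsSimpleModule R S)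
    (ι : Type u) (S' : ι → Type u) [∀ i, AddCommGroup (S' i)] [∀ i, Module R (S' i)]
    (hsimple : ∀ i, IsSimpleModule R (S' i))
    (hnotin : ∀ i, ¬ ∃ S ∈ 𝒮, Nonempty (S' i ≃ₗ[R] S))
    (hrep : ∀ (W : ModuleCat.{u} R), IsSimpleModule R W →
      (¬ ∃ S ∈ 𝒮, Nonempty ((W : ModuleCat.{u} R) ≃ₗ[R] S)) →
      ∃ i, Nonempty ((W : ModuleCat.{u} R) ≃ₗ[R] S' i))
    (E' : ι → Type u) [∀ i, AddCommGroup (E' i)] [∀ i, Module R (E' i)]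
    (hE'inj : ∀ i, Module.Injective R (E' i))
    (j : ∀ i, S' i →ₗ[R] E' i) (hj : ∀ i, Function.Injective (j i))
    (hess : ∀ i, ∀ N : Submodule R (E' i), N ⊓ LinearMap.range (j i) = ⊥ → N = ⊥) :
    Module.Injective R (∀ i, E' i) ∧
    ∀ M : ModuleCat.{u} R,
      ((∀ F : ModuleCat.{u} R, (∀ S ∈ 𝒮, ∀ g : (S : ModuleCat.{u} R) →ₗ[R] F, g = 0) →
          ∀ f : M →ₗ[R] F, f = 0) ↔
        ∀ f : M →ₗ[R] (∀ i, E' i), f = 0) := by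
  refine ⟨inferInstance, fun M => ⟨fun hT => hT (.of R (∀ i, E' i)) fun S hS g => ?_,
    fun hE F hF f => ?_⟩⟩
  · have := h𝒮 S hS
    ext x i
    by_contra hne
    have hgi : LinearMap.proj i ∘ₗ g ≠ 0 := fun h => hne congr($h x)
    obtain ⟨e⟩ := nonempty_linearEquiv_of_essential (hj i) (hess i) hgi
    exact hnotin i ⟨S, hS, ⟨e.symm⟩⟩
  · classical
    by_contra hf
    obtain ⟨T, hT, hTf⟩ := f.exists_isAtom_le_range hf
    have hT_simple := isSimpleModule_iff_isAtom.mpr hT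
    have hT𝒮 : ¬ ∃ S ∈ 𝒮, Nonempty ((ModuleCat.of R T : ModuleCat.{u} R) ≃ₗ[R] S) := by
      rintro ⟨S, hS, ⟨e⟩⟩
      refine hT.1 (eq_bot_iff.mpr fun t ht => ?_)
      simpa using congr($(hF S hS (T.subtype ∘ₗ e.symm.toLinearMap)) (e ⟨t, ht⟩))
    obtain ⟨i, ⟨e⟩⟩ := hrep _ hT_simple hT𝒮
    obtain ⟨h, hh⟩ := Module.Injective.exists_not_le_ker hT.1
      (g := LinearMap.single R E' i ∘ₗ j i ∘ₗ e.toLinearMap)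
      ((Pi.single_injective i).comp ((hj i).comp e.injective))
    exact hh (hTf.trans (range_le_ker_iff.mpr (hE _)))

/-- Let `R` be left Artinian, `𝒮` a set of pairwise non-isomorphic simple modules,
`S' i` (for `i : ι`) representatives of the remaining isomorphism classes of simples,
and `E' i` an injective hull of `S' i`.  Let `𝒯` be the torsion class of all modules `M`
with `Hom(M, F) = 0` whenever `Hom(S, F) = 0` for all `S ∈ 𝒮`.  Then `E = ∏ i, E' i`
is an injective cogenerator for `𝒯`: `E` is injective and `M ∈ 𝒯 ↔ Hom(M, E) = 0`. -/
theorem stmt15 {R : Type u} [Ring R] [IsArtinianRing R]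
    (𝒮 : Set (ModuleCat.{u} R)) (h𝒮 : ∀ S ∈ 𝒮, IsSimpleModule R S)
    (h𝒮' : ∀ S₁ ∈ 𝒮, ∀ S₂ ∈ 𝒮, Nonempty ((S₁ : ModuleCat.{u} R) ≃ₗ[R] S₂) → S₁ = S₂)
    (ι : Type u) (S' : ι → Type u) [∀ i, AddCommGroup (S' i)] [∀ i, Module R (S' i)]
    (hsimple : ∀ i, IsSimpleModule R (S' i))
    (hnotin : ∀ i, ¬ ∃ S ∈ 𝒮, Nonempty (S' i ≃ₗ[R] S))
    (hrep : ∀ (W : ModuleCat.{u} R), IsSimpleModule R W →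
      (¬ ∃ S ∈ 𝒮, Nonempty ((W : ModuleCat.{u} R) ≃ₗ[R] S)) →
      ∃ i, Nonempty ((W : ModuleCat.{u} R) ≃ₗ[R] S' i))
    (E' : ι → Type u) [∀ i, AddCommGroup (E' i)] [∀ i, Module R (E' i)]
    (hE'inj : ∀ i, Module.Injective R (E' i))
    (j : ∀ i, S' i →ₗ[R] E' i) (hj : ∀ i, Function.Injective (j i))
    (hess : ∀ i, ∀ N : Submodule R (E' i), N ⊓ LinearMap.range (j i) = ⊥ → N = ⊥) :
    Module.Injective R (∀ i, E' i) ∧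
    ∀ M : ModuleCat.{u} R,
      ((∀ F : ModuleCat.{u} R, (∀ S ∈ 𝒮, ∀ g : (S : ModuleCat.{u} R) →ₗ[R] F, g = 0) →
          ∀ f : M →ₗ[R] F, f = 0) ↔
        ∀ f : M →ₗ[R] (∀ i, E' i), f = 0) :=
  stmt15_general 𝒮 h𝒮 ι S' hsimple hnotin hrep E' hE'inj j hj hess
end

section
/- Let E be an injective left R-module, ℰ = End_R(E), and M an R-module. Suppose I is a cochain complex I⁰ → I¹ → ⋯ of injective R-modules, each a direct summand of a finite direct sum of copies of E, together with a map M → I⁰ such that the augmented complex 0 → M → I⁰ → I¹ → ⋯ has all cohomology modules N satisfying Hom_R(N,E) = 0. Then the induced map of ℰ-complexes Hom_R(I,E) → Hom_R(M,E) is a quasi-isomorphism, and Hom_R(I,E) is a complex of finitely generated projective ℰ-modules; hence Hom_ℰ(Hom_R(I,E),E) computes RHom_ℰ(Hom_R(M,E),E) and is isomorphic as a complex of R-modules to I. -/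
universe u


section Aux

variable {R : Type u} [Ring R] {E : Type u} [AddCommGroup E] [Module R E]

/-- Dualizing exactness: if all maps from the relevant cohomology of `A → B → C` to `E`
vanish and `E` is injective, then any `g : B → E` killing `u` factors through `v`. -/
lemma factor_aux {A B C : Type u} [AddCommGroup A] [Module R A] [AddCommGroup B] [Module R B]
    [AddCommGroup C] [Module R C] (hEinj : Module.Injective R E)
    (u : A →ₗ[R] B) (v : B →ₗ[R] C)
    (hcoh : ∀ f : (LinearMap.ker v ⧸
        Submodule.comap (LinearMap.ker v).subtype (LinearMap.range u)) →ₗ[R] E, f = 0)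
    (g : B →ₗ[R] E) (hg : g ∘ₗ u = 0) : ∃ h : C →ₗ[R] E, g = h ∘ₗ v := by
  set K := LinearMap.ker v
  set S := Submodule.comap K.subtype (LinearMap.range u)
  -- step 1 : g vanishes on ker v
  have hker : K ≤ LinearMap.ker g := by
    have hS : S ≤ LinearMap.ker (g ∘ₗ K.subtype) := by
      rintro ⟨x, hx⟩ hxS
      obtain ⟨y, hy⟩ := hxS
      simp only [LinearMap.mem_ker, LinearMap.comp_apply, Submodule.subtype_apply]
      have : x = u y := hy.symm
      rw [this, ← LinearMap.comp_apply, hg]; rfl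
    have h0 : S.liftQ (g ∘ₗ K.subtype) hS = 0 := hcoh _
    intro x hx
    have := DFunLike.congr_fun (Submodule.liftQ_mkQ S (g ∘ₗ K.subtype) hS) (⟨x, hx⟩ : K)
    rw [h0] at this
    simpa using this.symm
  -- step 2 : factor through range v and extend using injectivity of E
  let w : LinearMap.range v →ₗ[R] E :=
    (Submodule.liftQ K g hker) ∘ₗ (v.quotKerEquivRange.symm : LinearMap.range v →ₗ[R] B ⧸ K)
  obtain ⟨h, hh⟩ := hEinj.out (LinearMap.range v).subtype
    (Submodule.injective_subtype _) w
  refine ⟨h, ?_⟩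
  ext x
  have hx : v x ∈ LinearMap.range v := ⟨x, rfl⟩
  have h1 : h (v x) = w ⟨v x, hx⟩ := hh ⟨v x, hx⟩
  have h2 : v.quotKerEquivRange.symm ⟨v x, hx⟩ = Submodule.Quotient.mk x := by
    apply v.quotKerEquivRange.injective
    rw [LinearEquiv.apply_symm_apply]
    exact Subtype.ext (v.quotKerEquivRange_apply_mk x).symm
  simp only [LinearMap.comp_apply, h1, w, h2]
  simp [Submodule.liftQ_apply]

end Aux


section Summand

variable {R : Type u} [Ring R] {E : Type u} [AddCommGroup E] [Module R E]
variable {A : Type u} [AddCommGroup A] [Module R A]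

/-- `g ↦ (j ↦ g ∘ r ∘ single j)`, an `ℰ`-linear map into a finite free module. -/
def toFree (k : ℕ) (r : (Fin k → E) →ₗ[R] A) :
    (A →ₗ[R] E) →ₗ[Module.End R E] (Fin k → Module.End R E) where
  toFun g := fun j => (g ∘ₗ r) ∘ₗ LinearMap.single R (fun _ => E) j
  map_add' g₁ g₂ := by funext j; ext x; rfl
  map_smul' c g := by funext j; ext x; rfl

/-- `c ↦ ∑ i, c i ∘ proj i ∘ s`, an `ℰ`-linear map from a finite free module. -/
def fromFree (k : ℕ) (s : A →ₗ[R] (Fin k → E)) :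
    (Fin k → Module.End R E) →ₗ[Module.End R E] (A →ₗ[R] E) where
  toFun c := ∑ i, (c i : E →ₗ[R] E) ∘ₗ ((LinearMap.proj i) ∘ₗ s)
  map_add' c₁ c₂ := by
    ext x
    simp [LinearMap.add_comp, Finset.sum_add_distrib]
  map_smul' ψ c := by
    ext x
    simp only [LinearMap.sum_apply, LinearMap.comp_apply, RingHom.id_apply,
      LinearMap.smul_apply, Pi.smul_apply]
    rw [Finset.smul_sum]

lemma fromFree_toFree (k : ℕ) (s : A →ₗ[R] (Fin k → E)) (r : (Fin k → E) →ₗ[R] A)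
    (hrs : r ∘ₗ s = LinearMap.id) (g : A →ₗ[R] E) :
    fromFree k s (toFree k r g) = g := by
  ext x
  have h1 : (∑ i, Pi.single i (s x i)) = s x := Finset.univ_sum_single (s x)
  have h2 : r (s x) = x := DFunLike.congr_fun hrs x
  calc (fromFree k s (toFree k r g)) x
      = ∑ i, g (r (Pi.single i (s x i))) := by
        simp [fromFree, toFree, LinearMap.sum_apply]
    _ = g (r (∑ i, Pi.single i (s x i))) := by rw [map_sum, map_sum]
    _ = g x := by rw [h1, h2]

/-- Evaluation `A → Hom_ℰ(Hom_R(A,E),E)`. -/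
def evLin (R : Type u) [Ring R] (E : Type u) [AddCommGroup E] [Module R E]
    (A : Type u) [AddCommGroup A] [Module R A] :
    A →ₗ[R] ((A →ₗ[R] E) →ₗ[Module.End R E] E) where
  toFun x :=
    { toFun := fun φ => φ x
      map_add' := fun φ ψ => rfl
      map_smul' := fun c φ => rfl }
  map_add' x y := by ext φ; simp
  map_smul' c x := by ext φ; simp

lemma evLin_bijective (k : ℕ) (s : A →ₗ[R] (Fin k → E)) (r : (Fin k → E) →ₗ[R] A)
    (hrs : r ∘ₗ s = LinearMap.id) : Function.Bijective (evLin R E A) := by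
  constructor
  · refine (injective_iff_map_eq_zero _).mpr fun x hx => ?_
    have hφ : ∀ φ : A →ₗ[R] E, φ x = 0 := fun φ => DFunLike.congr_fun hx φ
    have hsx : s x = 0 := funext fun i => by simpa using hφ ((LinearMap.proj i) ∘ₗ s)
    have h2 : r (s x) = x := DFunLike.congr_fun hrs x
    rw [hsx, map_zero] at h2
    exact h2.symm
  · intro F
    set y : Fin k → E := fun i => F ((LinearMap.proj i) ∘ₗ s) with hy
    refine ⟨r y, ?_⟩
    ext φ
    have hφ : φ = ∑ i, (((φ ∘ₗ r) ∘ₗ LinearMap.single R (fun _ => E) i : Module.End R E)) •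
        ((LinearMap.proj i) ∘ₗ s) := by
      ext x
      have h1 : (∑ i, Pi.single i (s x i)) = s x := Finset.univ_sum_single (s x)
      have h2 : r (s x) = x := DFunLike.congr_fun hrs x
      calc φ x = φ (r (∑ i, Pi.single i (s x i))) := by rw [h1, h2]
        _ = ∑ i, φ (r (Pi.single i (s x i))) := by rw [map_sum, map_sum]
        _ = _ := by simp [LinearMap.sum_apply]
    calc (evLin R E A) (r y) φ = φ (r y) := rfl
      _ = φ (r (∑ i, Pi.single i (y i))) := by rw [Finset.univ_sum_single]
      _ = ∑ i, φ (r (Pi.single i (y i))) := by rw [map_sum, map_sum]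
      _ = F φ := by
          conv_rhs => rw [hφ, map_sum]
          refine Finset.sum_congr rfl fun i _ => ?_
          rw [F.map_smul]
          rfl

end Summand

/-- Core of the proof of the main theorem: let `E` be injective, `ℰ = End_R(E)`, and
`M → I⁰ → I¹ → ⋯` an augmented cochain complex where each `Iⁿ` is an injective module
which is a direct summand of a finite direct sum of copies of `E`, and where every
cohomology module `N` of the augmented complex satisfies `Hom_R(N, E) = 0`.  Then:
(1) each `Hom_R(Iⁿ, E)` is a finitely generated projective left `ℰ`-module;
(2) the induced map `Hom_R(I, E) → Hom_R(M, E)` is a quasi-isomorphism (so `Hom_R(I,E)`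
is a projective `ℰ`-resolution of `Hom_R(M,E)` and `Hom_ℰ(Hom_R(I,E),E)` computes
`RHom_ℰ(Hom_R(M,E),E)`); and
(3) the natural evaluation maps `Iⁿ → Hom_ℰ(Hom_R(Iⁿ,E),E)` are `R`-isomorphisms,
compatible with the differentials, so `Hom_ℰ(Hom_R(I,E),E) ≅ I` as complexes. -/
theorem stmt19 {R : Type u} [Ring R]
    (E : Type u) [AddCommGroup E] [Module R E] (hEinj : Module.Injective R E)
    (M : Type u) [AddCommGroup M] [Module R M]
    (I : ℕ → Type u) [∀ n, AddCommGroup (I n)] [∀ n, Module R (I n)]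
    (hIinj : ∀ n, Module.Injective R (I n))
    (hsummand : ∀ n, ∃ (k : ℕ) (s : I n →ₗ[R] (Fin k → E)) (r : (Fin k → E) →ₗ[R] I n),
      r ∘ₗ s = LinearMap.id)
    (d : ∀ n, I n →ₗ[R] I (n + 1)) (hdd : ∀ n, (d (n + 1)) ∘ₗ (d n) = 0)
    (a : M →ₗ[R] I 0) (hda : (d 0) ∘ₗ a = 0)
    -- all cohomology modules `N` of the augmented complex satisfy `Hom_R(N, E) = 0`:
    (hcoh0 : ∀ f : LinearMap.ker a →ₗ[R] E, f = 0)
    (hcoh1 : ∀ f : (LinearMap.ker (d 0) ⧸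
        Submodule.comap (LinearMap.ker (d 0)).subtype (LinearMap.range a)) →ₗ[R] E,
      f = 0)
    (hcohn : ∀ n, ∀ f : (LinearMap.ker (d (n + 1)) ⧸
        Submodule.comap (LinearMap.ker (d (n + 1))).subtype
          (LinearMap.range (d n))) →ₗ[R] E, f = 0) :
    -- (1) finitely generated projective `ℰ`-modules
    (∀ n, Module.Finite (Module.End R E) (I n →ₗ[R] E) ∧
      Module.Projective (Module.End R E) (I n →ₗ[R] E)) ∧
    -- (2) `Hom_R(I, E) → Hom_R(M, E)` is a quasi-isomorphism
    (Function.Surjective (fun g : I 0 →ₗ[R] E => g ∘ₗ a)) ∧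
    (∀ g : I 0 →ₗ[R] E, g ∘ₗ a = 0 ↔ ∃ h : I 1 →ₗ[R] E, g = h ∘ₗ d 0) ∧
    (∀ n, ∀ g : I (n + 1) →ₗ[R] E,
      g ∘ₗ d n = 0 ↔ ∃ h : I (n + 2) →ₗ[R] E, g = h ∘ₗ d (n + 1)) ∧
    -- (3) double duality: `Hom_ℰ(Hom_R(I,E),E) ≅ I` as complexes of `R`-modules
    ∃ ev : ∀ n, I n →ₗ[R] ((I n →ₗ[R] E) →ₗ[Module.End R E] E),
      (∀ n (x : I n) (φ : I n →ₗ[R] E), ev n x φ = φ x) ∧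
      (∀ n, Function.Bijective (ev n)) ∧
      (∀ n (x : I n) (φ : I (n + 1) →ₗ[R] E), ev (n + 1) (d n x) φ = ev n x (φ ∘ₗ d n)) := by
  refine ⟨?_, ?_, ?_, ?_, ?_⟩
  · -- (1) finitely generated projective
    intro n
    obtain ⟨k, s, r, hrs⟩ := hsummand n
    constructor
    · exact Module.Finite.of_surjective (fromFree k s)
        (fun g => ⟨toFree k r g, fromFree_toFree k s r hrs g⟩)
    · exact Module.Projective.of_split (toFree k r) (fromFree k s)
        (LinearMap.ext (fromFree_toFree k s r hrs))
  · -- surjectivity of `g ↦ g ∘ a`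
    intro f
    have hcoh : ∀ f' : (LinearMap.ker a ⧸
        Submodule.comap (LinearMap.ker a).subtype
          (LinearMap.range (LinearMap.ker a).subtype)) →ₗ[R] E, f' = 0 := by
      intro f'
      refine Submodule.linearMap_qext _ ?_
      rw [hcoh0 (f' ∘ₗ Submodule.mkQ _)]
      simp
    obtain ⟨h, hh⟩ := factor_aux hEinj (LinearMap.ker a).subtype a hcoh f (hcoh0 _)
    exact ⟨h, hh.symm⟩
  · -- exactness at degree 0
    intro g
    constructor
    · intro hg
      exact factor_aux hEinj a (d 0) hcoh1 g hg
    · rintro ⟨h, rfl⟩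
      rw [LinearMap.comp_assoc, hda, LinearMap.comp_zero]
  · -- exactness at degree n + 1
    intro n g
    constructor
    · intro hg
      exact factor_aux hEinj (d n) (d (n + 1)) (hcohn n) g hg
    · rintro ⟨h, rfl⟩
      rw [LinearMap.comp_assoc, hdd n, LinearMap.comp_zero]
  · -- (3) double duality
    refine ⟨fun n => evLin R E (I n), fun n x φ => rfl, ?_, fun n x φ => rfl⟩
    intro n
    obtain ⟨k, s, r, hrs⟩ := hsummand n
    exact evLin_bijective k s r hrs
end
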